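/- In the oblivious chase of a forward-existential rule set R^∃ from the instance {⊤}, for every atom A(t,u), the timestamp of t is strictly smaller than the timestamp of u; consequently, the multiset of timestamps strictly decreases (in the lexicographic multiset order) when one replaces, in a finite set of chase atoms, all atoms incident to a timestamp-maximal term u by the body image of the trigger that created u. -/

import Mathlib

/-! Basic framework for existential rules and the oblivious chase. -/

/-- An existential rule: body and head are finite lists of atoms over
variables (natural numbers).  Head variables not occurring in the body are
(implicitly) existentially quantified. -/
structure Rule (P : Type) where
  body : List (P × List ℕ)
  head : List (P × List ℕ)

/-- Terms of the chase: base terms, and canonical nulls `null ρ σ v`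
created for the existential variable `v` by the trigger `(ρ, σ)`. -/
inductive CTerm (P : Type) where
  | base : ℕ → CTerm P
  | null : Rule P → (ℕ → CTerm P) → ℕ → CTerm P

/-- An atom over chase terms. -/
abbrev CAtom (P : Type) := P × List (CTerm P)

/-- An instance is a set of atoms. -/
abbrev CInst (P : Type) := Set (CAtom P)

def mapAtom {P : Type} (σ : ℕ → CTerm P) (a : P × List ℕ) : CAtom P :=
  (a.1, a.2.map σ)

def bodyVars {P : Type} (ρ : Rule P) : Set ℕ := {v | ∃ a ∈ ρ.body, v ∈ a.2}

def headVars {P : Type} (ρ : Rule P) : Set ℕ := {v | ∃ a ∈ ρ.head, v ∈ a.2}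

/-- A rule is Datalog iff it has no existential variables. -/
def IsDatalog {P : Type} (ρ : Rule P) : Prop := headVars ρ ⊆ bodyVars ρ

open Classical in
/-- Canonical restriction of a substitution to the body variables of a rule. -/
noncomputable def canonSub {P : Type} (ρ : Rule P) (σ : ℕ → CTerm P) : ℕ → CTerm P :=
  fun v => if v ∈ bodyVars ρ then σ v else CTerm.base 0

open Classical in
/-- Output of the trigger `(ρ, σ)`: the head atoms, with frontier variables
mapped by `σ` and existential variables mapped to canonical fresh nulls. -/
noncomputable def triggerOut {P : Type} (ρ : Rule P) (σ : ℕ → CTerm P) : CInst P :=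
  {b | ∃ a ∈ ρ.head,
    b = mapAtom (fun v => if v ∈ bodyVars ρ then σ v
                          else CTerm.null ρ (canonSub ρ σ) v) a}

/-- `(ρ, σ)` is a trigger on `I`. -/
def bodyHolds {P : Type} (ρ : Rule P) (σ : ℕ → CTerm P) (I : CInst P) : Prop :=
  ∀ a ∈ ρ.body, mapAtom σ a ∈ I

/-- One (oblivious) chase step: apply all triggers simultaneously. -/
noncomputable def chaseStep {P : Type} (R : Set (Rule P)) (I : CInst P) : CInst P :=
  I ∪ {b | ∃ ρ ∈ R, ∃ σ, bodyHolds ρ σ I ∧ b ∈ triggerOut ρ σ}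

/-- The result of the oblivious chase of `I` with the rule set `R`. -/
noncomputable def chase {P : Type} (R : Set (Rule P)) (I : CInst P) : CInst P :=
  ⋃ n, (chaseStep R)^[n] I

/-- Active domain of an instance. -/
def termsOf {P : Type} (I : CInst P) : Set (CTerm P) := {t | ∃ a ∈ I, t ∈ a.2}

def mapTAtom {P : Type} (h : CTerm P → CTerm P) (a : CAtom P) : CAtom P := (a.1, a.2.map h)

/-- `h` is a homomorphism from `I` to `J`. -/
def IsHom {P : Type} (h : CTerm P → CTerm P) (I J : CInst P) : Prop :=
  ∀ a ∈ I, mapTAtom h a ∈ J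

/-- Homomorphic equivalence of instances. -/
def HomEquiv {P : Type} (I J : CInst P) : Prop :=
  (∃ h, IsHom h I J) ∧ (∃ h, IsHom h J I)

/-- A conjunctive query: a list of atoms together with the tuple of answer variables. -/
abbrev CQuery (P : Type) := List (P × List ℕ) × List ℕ

/-- Entailment of a CQ for an answer tuple `t`. -/
def cqSat {P : Type} (I : CInst P) (q : CQuery P) (t : List (CTerm P)) : Prop :=
  ∃ σ : ℕ → CTerm P, (∀ a ∈ q.1, mapAtom σ a ∈ I) ∧ q.2.map σ = t

/-- Entailment of a UCQ (a finite disjunction, given as a list, of CQs). -/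
def ucqSat {P : Type} (I : CInst P) (Q : List (CQuery P)) (t : List (CTerm P)) : Prop :=
  ∃ q ∈ Q, cqSat I q t

/-- A rule set is UCQ-rewritable if every CQ admits a UCQ rewriting valid over
all instances and all answer tuples from the active domain. -/
def UCQRewritable {P : Type} (R : Set (Rule P)) : Prop :=
  ∀ q : CQuery P, ∃ Q : List (CQuery P), ∀ (I : CInst P) (t : List (CTerm P)),
    (∀ x ∈ t, x ∈ termsOf I) → (cqSat (chase R I) q t ↔ ucqSat I Q t)

/-- A rule is forward-existential: every binary head-atom `A(x,y)` has `x` a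
frontier variable and `y` an existential variable. -/
def ForwardExistential {P : Type} (ρ : Rule P) : Prop :=
  ∀ a ∈ ρ.head, ∀ x y : ℕ, a.2 = [x, y] → x ∈ bodyVars ρ ∧ y ∉ bodyVars ρ

/-- The timestamp of a chase term: the least `n` such that the term occurs in
the active domain of the `n`-th chase step. -/
noncomputable def timestamp {P : Type} (R : Set (Rule P)) (I : CInst P)
    (t : CTerm P) : ℕ :=
  sInf {n | t ∈ termsOf ((chaseStep R)^[n] I)}

open Classical in
/-- The multiset of timestamps of the (distinct) terms occurring in a finite
set of atoms, given as a list. -/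
noncomputable def timestampsOf {P : Type} (R : Set (Rule P)) (I : CInst P)
    (l : List (CAtom P)) : Multiset ℕ :=
  ((l.flatMap Prod.snd).dedup.map (timestamp R I) : List ℕ)

/-- `m` is the maximum of the multiset `M`. -/
def IsMaxOf (M : Multiset ℕ) (m : ℕ) : Prop := m ∈ M ∧ ∀ x ∈ M, x ≤ m

/-- The strict lexicographic order on finite multisets of naturals. -/
inductive MLex : Multiset ℕ → Multiset ℕ → Prop
  | empty (N : Multiset ℕ) (h : N ≠ 0) : MLex 0 N
  | maxLt (M N : Multiset ℕ) (m n : ℕ) (hm : IsMaxOf M m) (hn : IsMaxOf N n)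
      (h : m < n) : MLex M N
  | maxEq (M N : Multiset ℕ) (m n : ℕ) (hm : IsMaxOf M m) (hn : IsMaxOf N n)
      (h : m = n) (hrec : MLex (M.erase m) (N.erase n)) : MLex M N

open Classical in
/-- Remove from a list of atoms all atoms incident to the term `u`. -/
noncomputable def removeAtomsWith {P : Type} (u : CTerm P) (l : List (CAtom P)) :
    List (CAtom P) :=
  l.filter (fun a => decide (u ∉ a.2))

section AuxTimestamps

open Classical

variable {P : Type}

private lemma aux_exists_max (M : Multiset ℕ) (h : M ≠ 0) : ∃ m, IsMaxOf M m := by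
  induction M using Multiset.induction_on with
  | empty => exact absurd rfl h
  | cons a s ih =>
    by_cases hs : s = 0
    · subst hs
      exact ⟨a, Multiset.mem_cons_self a 0, by intro x hx; simp at hx; omega⟩
    · obtain ⟨m, hm, hmax⟩ := ih hs
      refine ⟨max a m, ?_, ?_⟩
      · rcases le_total a m with h' | h'
        · rw [max_eq_right h']; exact Multiset.mem_cons_of_mem hm
        · rw [max_eq_left h']; exact Multiset.mem_cons_self a s
      · intro x hx
        rcases Multiset.mem_cons.mp hx with rfl | hx
        · exact le_max_left _ _
        · exact le_trans (hmax x hx) (le_max_right _ _)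

private lemma aux_mlex_of_count (m : ℕ) : ∀ (c : ℕ) (M' M : Multiset ℕ),
    M'.count m = c → (∀ x ∈ M', x ≤ m) → (∀ x ∈ M, x ≤ m) → m ∈ M →
    M'.count m < M.count m → MLex M' M := by
  intro c
  induction c with
  | zero =>
    intro M' M hc hM' hM hm _
    by_cases h0 : M' = 0
    · subst h0; exact MLex.empty M (by rintro rfl; simp at hm)
    · obtain ⟨m', hm'⟩ := aux_exists_max M' h0
      refine MLex.maxLt M' M m' m hm' ⟨hm, hM⟩ ?_
      have hne : m' ≠ m := by
        rintro rfl
        have := Multiset.count_pos.mpr hm'.1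
        omega
      exact lt_of_le_of_ne (hM' m' hm'.1) hne
  | succ c ih =>
    intro M' M hc hM' hM hm hlt
    have hmM' : m ∈ M' := Multiset.count_pos.mp (by omega)
    refine MLex.maxEq M' M m m ⟨hmM', hM'⟩ ⟨hm, hM⟩ rfl ?_
    apply ih
    · rw [Multiset.count_erase_self]; omega
    · intro x hx; exact hM' x (Multiset.mem_of_mem_erase hx)
    · intro x hx; exact hM x (Multiset.mem_of_mem_erase hx)
    · rw [← Multiset.count_pos, Multiset.count_erase_self]; omega
    · rw [Multiset.count_erase_self, Multiset.count_erase_self]; omega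

private lemma aux_create (R : Set (Rule P)) (I₀ : CInst P)
    (h0 : ∀ a ∈ I₀, a.2 = ([] : List (CTerm P))) :
    ∀ (n : ℕ) (ρ : Rule P) (τ : ℕ → CTerm P) (z : ℕ),
      CTerm.null ρ τ z ∈ termsOf ((chaseStep R)^[n] I₀) →
      ∃ m < n, ∃ σ, ρ ∈ R ∧ τ = canonSub ρ σ ∧ bodyHolds ρ σ ((chaseStep R)^[m] I₀) := by
  intro n
  induction n with
  | zero =>
    rintro ρ τ z ⟨a, ha, hta⟩
    rw [h0 a ha] at hta
    exact absurd hta List.not_mem_nil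
  | succ n ih =>
    rintro ρ τ z ht
    rw [Function.iterate_succ_apply'] at ht
    obtain ⟨a, ha, hta⟩ := ht
    simp only [chaseStep, triggerOut, Set.mem_union, Set.mem_setOf_eq] at ha
    rcases ha with ha | ⟨ρ', hρ', σ, hbody, b, hb, rfl⟩
    · obtain ⟨m, hm, rest⟩ := ih ρ τ z ⟨a, ha, hta⟩
      exact ⟨m, Nat.lt_succ_of_lt hm, rest⟩
    · obtain ⟨v, hv, hfv⟩ := List.mem_map.mp hta
      by_cases hvb : v ∈ bodyVars ρ'
      · rw [if_pos hvb] at hfv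
        obtain ⟨a', ha', hva'⟩ := hvb
        have hmem : CTerm.null ρ τ z ∈ termsOf ((chaseStep R)^[n] I₀) :=
          ⟨mapAtom σ a', hbody a' ha', hfv ▸ List.mem_map_of_mem (f := σ) hva'⟩
        obtain ⟨m, hm, rest⟩ := ih ρ τ z hmem
        exact ⟨m, Nat.lt_succ_of_lt hm, rest⟩
      · rw [if_neg hvb] at hfv
        obtain ⟨rfl, h2, rfl⟩ := CTerm.null.inj hfv
        exact ⟨n, Nat.lt_succ_self n, σ, hρ', h2.symm, hbody⟩

private lemma aux_key (R : Set (Rule P)) (I₀ : CInst P)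
    (h0 : ∀ a ∈ I₀, a.2 = ([] : List (CTerm P)))
    (ρ : Rule P) (τ : ℕ → CTerm P) (z : ℕ)
    (hu : CTerm.null ρ τ z ∈ termsOf (chase R I₀)) :
    ∃ m < timestamp R I₀ (CTerm.null ρ τ z),
      ρ ∈ R ∧ ∀ a ∈ ρ.body, mapAtom τ a ∈ (chaseStep R)^[m] I₀ := by
  have hne : {n | CTerm.null ρ τ z ∈ termsOf ((chaseStep R)^[n] I₀)}.Nonempty := by
    obtain ⟨a, ha, hta⟩ := hu
    simp only [chase, Set.mem_iUnion] at ha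
    obtain ⟨n, han⟩ := ha
    exact ⟨n, a, han, hta⟩
  have hmem := Nat.sInf_mem hne
  obtain ⟨m, hm, σ, hρ, hτ, hb⟩ := aux_create R I₀ h0 _ ρ τ z hmem
  refine ⟨m, hm, hρ, fun a ha => ?_⟩
  have heq : mapAtom τ a = mapAtom σ a := by
    unfold mapAtom
    congr 1
    apply List.map_congr_left
    intro v hv
    rw [hτ]
    simp only [canonSub]
    exact if_pos ⟨a, ha, hv⟩
  rw [heq]; exact hb a ha

private lemma aux_shape (R : Set (Rule P)) (hfe : ∀ ρ ∈ R, ForwardExistential ρ)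
    (I₀ : CInst P) (h0 : ∀ a ∈ I₀, a.2 = ([] : List (CTerm P))) :
    ∀ (n : ℕ) (A : P) (t u : CTerm P), (A, [t, u]) ∈ (chaseStep R)^[n] I₀ →
      ∃ ρ ∈ R, ∃ τ x y, x ∈ bodyVars ρ ∧ t = τ x ∧ u = CTerm.null ρ τ y := by
  intro n
  induction n with
  | zero =>
    intro A t u h
    have := h0 _ h
    simp at this
  | succ n ih =>
    intro A t u h
    rw [Function.iterate_succ_apply'] at h
    simp only [chaseStep, triggerOut, Set.mem_union, Set.mem_setOf_eq] at h
    rcases h with h | ⟨ρ, hρ, σ, hbody, a, ha, heq⟩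
    · exact ih A t u h
    · have h2 : a.2.map (fun v => if v ∈ bodyVars ρ then σ v
          else CTerm.null ρ (canonSub ρ σ) v) = [t, u] :=
        (congrArg Prod.snd heq).symm
    -- a.2 has length two
      have hlen : a.2.length = 2 := by
        have := congrArg List.length h2; simpa using this
      obtain ⟨x, y, hxy⟩ := List.length_eq_two.mp hlen
      obtain ⟨hx, hy⟩ := hfe ρ hρ a ha x y hxy
      rw [hxy] at h2
      simp only [List.map_cons, List.map_nil, List.cons.injEq, and_true] at h2
      obtain ⟨h2t, h2u⟩ := h2
      rw [if_pos hx] at h2t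
      rw [if_neg hy] at h2u
      refine ⟨ρ, hρ, canonSub ρ σ, x, y, hx, ?_, h2u.symm⟩
      rw [← h2t]
      simp only [canonSub]
      rw [if_pos hx]

private lemma aux_part_a (tp : P) (R : Set (Rule P))
    (hfe : ∀ ρ ∈ R, ForwardExistential ρ)
    (A : P) (t u : CTerm P)
    (hC : (A, [t, u]) ∈ chase R {(tp, ([] : List (CTerm P)))}) :
    timestamp R {(tp, ([] : List (CTerm P)))} t <
      timestamp R {(tp, ([] : List (CTerm P)))} u := by
  set top : CInst P := {(tp, ([] : List (CTerm P)))} with htop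
  have h0 : ∀ a ∈ top, a.2 = ([] : List (CTerm P)) := by
    intro a ha
    rw [htop, Set.mem_singleton_iff] at ha
    rw [ha]
  have hC' := hC
  simp only [chase, Set.mem_iUnion] at hC'
  obtain ⟨n, hn⟩ := hC'
  obtain ⟨ρ, hρ, τ, x, y, hx, rfl, rfl⟩ := aux_shape R hfe top h0 n A t u hn
  have hu : CTerm.null ρ τ y ∈ termsOf (chase R top) :=
    ⟨(A, [τ x, CTerm.null ρ τ y]), hC, by simp⟩
  obtain ⟨m, hm, _, hb⟩ := aux_key R top h0 ρ τ y hu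
  obtain ⟨a, ha, hxa⟩ := hx
  have hmem : τ x ∈ termsOf ((chaseStep R)^[m] top) :=
    ⟨mapAtom τ a, hb a ha, List.mem_map_of_mem (f := τ) hxa⟩
  have hts : timestamp R top (τ x) ≤ m := Nat.sInf_le hmem
  exact lt_of_le_of_lt hts hm

private lemma aux_part_b (tp : P) (R : Set (Rule P))
    (hfe : ∀ ρ ∈ R, ForwardExistential ρ)
    (S : List (CAtom P))
    (hS : ∀ a ∈ S, a ∈ chase R {(tp, ([] : List (CTerm P)))})
    (ρ : Rule P) (σ : ℕ → CTerm P) (z : ℕ) (hρ : ρ ∈ R)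
    (hu : CTerm.null ρ σ z ∈ termsOf (chase R {(tp, ([] : List (CTerm P)))}))
    (hins : ∃ a ∈ S, CTerm.null ρ σ z ∈ a.2)
    (hmax : ∀ a ∈ S, ∀ t ∈ a.2,
      timestamp R {(tp, ([] : List (CTerm P)))} t ≤
        timestamp R {(tp, ([] : List (CTerm P)))} (CTerm.null ρ σ z)) :
    MLex
      (timestampsOf R {(tp, ([] : List (CTerm P)))}
        (removeAtomsWith (CTerm.null ρ σ z) S ++ ρ.body.map (mapAtom σ)))
      (timestampsOf R {(tp, ([] : List (CTerm P)))} S) := by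
  set top : CInst P := {(tp, ([] : List (CTerm P)))} with htop
  have h0 : ∀ a ∈ top, a.2 = ([] : List (CTerm P)) := by
    intro a ha
    rw [htop, Set.mem_singleton_iff] at ha
    rw [ha]
  set ts : CTerm P → ℕ := timestamp R top with hts
  set u : CTerm P := CTerm.null ρ σ z with hudef
  obtain ⟨m', hm', _, hb⟩ := aux_key R top h0 ρ σ z hu
  set L : List (CTerm P) := (S.flatMap Prod.snd).dedup with hL
  set L' : List (CTerm P) :=
    ((removeAtomsWith u S ++ ρ.body.map (mapAtom σ)).flatMap Prod.snd).dedup with hL'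
  -- timestamps of terms of the body image are < ts u
  have hbody_ts : ∀ t, (∃ a ∈ ρ.body, t ∈ (mapAtom σ a).2) → ts t < ts u := by
    rintro t ⟨a, ha, hta⟩
    have : t ∈ termsOf ((chaseStep R)^[m'] top) := ⟨mapAtom σ a, hb a ha, hta⟩
    exact lt_of_le_of_lt (Nat.sInf_le this) hm'
  -- terms of L' with maximal timestamp come from S and differ from u
  have hL'sub : ∀ t ∈ L', ts t = ts u → t ∈ L ∧ t ≠ u := by
    intro t htL' htts
    rw [hL', List.mem_dedup, List.mem_flatMap] at htL'
    obtain ⟨a, ha, hta⟩ := htL'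
    rw [List.mem_append] at ha
    rcases ha with ha | ha
    · rw [removeAtomsWith, List.mem_filter] at ha
      obtain ⟨haS, hnot⟩ := ha
      have hnotu : u ∉ a.2 := by simpa using hnot
      refine ⟨?_, ?_⟩
      · rw [hL, List.mem_dedup, List.mem_flatMap]; exact ⟨a, haS, hta⟩
      · rintro rfl; exact hnotu hta
    · obtain ⟨b, hbmem, rfl⟩ := List.mem_map.mp ha
      exact absurd htts (Nat.ne_of_lt (hbody_ts t ⟨b, hbmem, hta⟩))
  -- every term of L' has timestamp ≤ ts u
  have hL'le : ∀ t ∈ L', ts t ≤ ts u := by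
    intro t htL'
    rw [hL', List.mem_dedup, List.mem_flatMap] at htL'
    obtain ⟨a, ha, hta⟩ := htL'
    rw [List.mem_append] at ha
    rcases ha with ha | ha
    · rw [removeAtomsWith, List.mem_filter] at ha
      exact hmax a ha.1 t hta
    · obtain ⟨b, hbmem, rfl⟩ := List.mem_map.mp ha
      exact le_of_lt (hbody_ts t ⟨b, hbmem, hta⟩)
  have huL : u ∈ L := by
    obtain ⟨a, haS, hua⟩ := hins
    rw [hL, List.mem_dedup, List.mem_flatMap]
    exact ⟨a, haS, hua⟩
  -- identify the two multisets
  have hMdef : timestampsOf R top S = Multiset.map ts (↑L) := by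
    simp [timestampsOf, hL, hts]
  have hM'def : timestampsOf R top
      (removeAtomsWith u S ++ ρ.body.map (mapAtom σ)) = Multiset.map ts (↑L') := by
    simp [timestampsOf, hL', hts]
  rw [hMdef, hM'def]
  -- apply the multiset lemma with m := ts u
  apply aux_mlex_of_count (ts u) ((Multiset.map ts (↑L' : Multiset (CTerm P))).count (ts u))
    _ _ rfl
  · intro x hx
    obtain ⟨t, htL', rfl⟩ := Multiset.mem_map.mp hx
    exact hL'le t (by exact_mod_cast htL')
  · intro x hx
    obtain ⟨t, htL, rfl⟩ := Multiset.mem_map.mp hx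
    have htL2 : t ∈ L := by exact_mod_cast htL
    rw [hL, List.mem_dedup, List.mem_flatMap] at htL2
    obtain ⟨a, ha, hta⟩ := htL2
    exact hmax a ha t hta
  · exact Multiset.mem_map.mpr ⟨u, by exact_mod_cast huL, rfl⟩
  · -- count comparison
    rw [Multiset.count_map, Multiset.count_map]
    have hnodupL : (↑L : Multiset (CTerm P)).Nodup := by
      rw [Multiset.coe_nodup]; exact List.nodup_dedup _
    have hnodupL' : (↑L' : Multiset (CTerm P)).Nodup := by
      rw [Multiset.coe_nodup]; exact List.nodup_dedup _
    have huF : u ∈ Multiset.filter (fun t => ts u = ts t) (↑L : Multiset (CTerm P)) :=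
      Multiset.mem_filter.mpr ⟨by exact_mod_cast huL, rfl⟩
    have hle : Multiset.filter (fun t => ts u = ts t) (↑L' : Multiset (CTerm P)) ≤
        (Multiset.filter (fun t => ts u = ts t) (↑L : Multiset (CTerm P))).erase u := by
      rw [Multiset.le_iff_subset (Multiset.Nodup.filter _ hnodupL')]
      intro t htmem
      obtain ⟨htL', htts⟩ := Multiset.mem_filter.mp htmem
      obtain ⟨htL, htne⟩ := hL'sub t (by exact_mod_cast htL') htts.symm
      rw [Multiset.mem_erase_of_ne htne]
      exact Multiset.mem_filter.mpr ⟨by exact_mod_cast htL, htts⟩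
    have hcard := Multiset.card_le_card hle
    rw [Multiset.card_erase_of_mem huF, Nat.pred_eq_sub_one] at hcard
    have hpos : 0 < Multiset.card
        (Multiset.filter (fun t => ts u = ts t) (↑L : Multiset (CTerm P))) :=
      Multiset.card_pos_iff_exists_mem.mpr ⟨u, huF⟩
    omega

end AuxTimestamps

/-- In the oblivious chase of a forward-existential rule set `R` from `{⊤}`:
(a) every atom `A(t,u)` satisfies `timestamp t < timestamp u`; and (b) given a
finite set `S` of chase atoms (as a list) and a timestamp-maximal term
`u = null ρ σ z` of `S` created by the trigger `(ρ, σ)`, replacing in `S` all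
atoms incident to `u` by the body image of that trigger strictly decreases the
multiset of timestamps in the lexicographic multiset order. -/
theorem timestamps_decrease {P : Type} (tp : P) (R : Set (Rule P))
    (hfe : ∀ ρ ∈ R, ForwardExistential ρ) :
    let top : CInst P := {(tp, ([] : List (CTerm P)))}
    let C := chase R top
    let ts := timestamp R top
    (∀ (A : P) (t u : CTerm P), (A, [t, u]) ∈ C → ts t < ts u) ∧
    (∀ (S : List (CAtom P)), (∀ a ∈ S, a ∈ C) →
      ∀ (ρ : Rule P) (σ : ℕ → CTerm P) (z : ℕ), ρ ∈ R →
        CTerm.null ρ σ z ∈ termsOf C →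
        (∃ a ∈ S, CTerm.null ρ σ z ∈ a.2) →
        (∀ a ∈ S, ∀ t ∈ a.2, ts t ≤ ts (CTerm.null ρ σ z)) →
        MLex
          (timestampsOf R top
            (removeAtomsWith (CTerm.null ρ σ z) S ++ ρ.body.map (mapAtom σ)))
          (timestampsOf R top S)) := by
  intro top C ts
  exact ⟨fun A t u hC => aux_part_a tp R hfe A t u hC,
    fun S hS ρ σ z hρ hu hins hmax =>
      aux_part_b tp R hfe S hS ρ σ z hρ hu hins hmax⟩
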